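/- Threshold inequalities for the cdf bounds. Assume overlap and 0 < c̲ < p₁ < c̄ < 1. Then, writing F(y−) for the left limit of a monotone function F at y: max{F̄₁(Q̄₁−), F̲₀(Q̲₀−)} ≤ (c̄ − p₁)/(c̄ − c̲) ≤ min{F̄₁(Q̄₁), F̲₀(Q̲₀)}, and max{F̄₀(Q̄₀−), F̲₁(Q̲₁−)} ≤ (p₁ − c̲)/(c̄ − c̲) ≤ min{F̄₀(Q̄₀), F̲₁(Q̲₁)}. -/

import Mathlib

/-!
Both `G₁` and `G₀` are cdfs: `G₁` is the cdf of the law of `Y` under `P[· | X = 1]`, and likewise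
for `G₀`. Each bound is a monotone piecewise-linear transform `φ ∘ G` whose two linear pieces
cross exactly at the threshold `τ`, with common value the target constant. At the quantile
`Q = inf {y | τ ≤ G y}` right-continuity gives `τ ≤ G Q`, while `G y < τ` for `y < Q`; applying
the monotone `φ` sandwiches the target between `(φ ∘ G)(Q−)` and `(φ ∘ G)(Q)`.
-/

open MeasureTheory ProbabilityTheory Set Filter Function
open scoped Topology

noncomputable section

def quantile (F : ℝ → ℝ) (τ : ℝ) : ℝ := sInf {y | τ ≤ F y}

theorem apply_lt_of_lt_quantile {F : ℝ → ℝ} {τ y : ℝ} (hbdd : BddBelow {y | τ ≤ F y})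
    (hy : y < quantile F τ) : F y < τ :=
  not_le.mp fun h => (csInf_le hbdd h).not_gt hy

theorem StieltjesFunction.le_apply_quantile (f : StieltjesFunction ℝ) {τ : ℝ}
    (hne : {y | τ ≤ f y}.Nonempty) : τ ≤ f (quantile f τ) := by
  have h_above : ∀ᶠ y in 𝓝[>] quantile f τ, τ ≤ f y := by
    filter_upwards [self_mem_nhdsWithin] with y hy
    obtain ⟨z, hz, hzy⟩ := exists_lt_of_csInf_lt hne hy
    exact hz.trans (f.mono hzy.le)
  exact ge_of_tendsto ((f.right_continuous _).mono Ioi_subset_Ici_self) h_above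

namespace ProbabilityTheory

section Quantile

variable (μ : Measure ℝ) {τ : ℝ}

theorem bddBelow_setOf_le_cdf (hτ : 0 < τ) : BddBelow {y | τ ≤ cdf μ y} := by
  obtain ⟨b, hb⟩ :=
    ((tendsto_cdf_atBot μ).eventually (eventually_lt_nhds hτ)).exists_forall_of_atBot
  exact ⟨b, fun y hy => not_lt.mp fun hyb => (hb y hyb.le).not_ge hy⟩

theorem setOf_le_cdf_nonempty (hτ : τ < 1) : {y | τ ≤ cdf μ y}.Nonempty :=
  ((tendsto_cdf_atTop μ).eventually (eventually_ge_nhds hτ)).exists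

theorem leftLim_comp_cdf_quantile_le_and_le {φ : ℝ → ℝ} (hφ : Monotone φ) (hτ0 : 0 < τ)
    (hτ1 : τ < 1) :
    leftLim (φ ∘ cdf μ) (quantile (cdf μ) τ) ≤ φ τ ∧ φ τ ≤ φ (cdf μ (quantile (cdf μ) τ)) := by
  have hbdd := bddBelow_setOf_le_cdf μ hτ0
  refine ⟨?_, hφ ((cdf μ).le_apply_quantile (setOf_le_cdf_nonempty μ hτ1))⟩
  refine le_of_tendsto ((hφ.comp (monotone_cdf μ)).tendsto_leftLim _) ?_
  filter_upwards [self_mem_nhdsWithin] with y hy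
  exact hφ (apply_lt_of_lt_quantile hbdd hy).le

end Quantile

theorem cdf_map_cond_apply {Ω : Type*} [MeasurableSpace Ω] (P : Measure Ω) [IsFiniteMeasure P]
    {Z : Ω → ℝ} (hZ : Measurable Z) {A : Set Ω} (hA : MeasurableSet A) (hPA : P A ≠ 0)
    (y : ℝ) : cdf ((P[|A]).map Z) y = (P {ω | Z ω ≤ y ∧ ω ∈ A}).toReal / (P A).toReal := by
  have := cond_isProbabilityMeasure (μ := P) hPA
  have := Measure.isProbabilityMeasure_map (μ := P[|A]) hZ.aemeasurable
  rw [cdf_eq_real, map_measureReal_apply hZ measurableSet_Iic, measureReal_def, cond_apply hA,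
    ENNReal.toReal_mul, ENNReal.toReal_inv, inter_comm, div_eq_inv_mul]
  rfl

end ProbabilityTheory

/- With `(p, cl, cu) = (p₁, c̲, c̄)` these give `F̄₁ = upperCdfBound p cl cu ∘ G₁`,
`F̲₁ = lowerCdfBound p cl cu ∘ G₁` and `τ̲₁`; with `(p, cl, cu) = (p₀, 1 - c̄, 1 - c̲)` they give
`F̄₀`, `F̲₀` and `τ̲₀` in the same way. -/

def upperCdfBound (p cl cu t : ℝ) : ℝ := min (t * p / cl) ((cu - p) / cu + t * p / cu)

def lowerCdfBound (p cl cu t : ℝ) : ℝ := max (t * p / cu) ((cl - p) / cl + t * p / cl)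

def lowerThreshold (p cl cu : ℝ) : ℝ := (p - cl) * cu / (p * (cu - cl))
section Thresholds

variable {p cl cu : ℝ}

theorem upperCdfBound_monotone (hp : 0 ≤ p) (hcl : 0 ≤ cl) (hcu : 0 ≤ cu) :
    Monotone (upperCdfBound p cl cu) := fun s t hst => by
  unfold upperCdfBound
  gcongr

theorem lowerCdfBound_monotone (hp : 0 ≤ p) (hcl : 0 ≤ cl) (hcu : 0 ≤ cu) :
    Monotone (lowerCdfBound p cl cu) := fun s t hst => by
  unfold lowerCdfBound
  gcongr

theorem lowerThreshold_pos (hcl : 0 < cl) (hclp : cl < p) (hpcu : p < cu) :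
    0 < lowerThreshold p cl cu := by
  have hp : 0 < p := hcl.trans hclp
  exact div_pos (mul_pos (by linarith) (by linarith)) (mul_pos hp (by linarith))

theorem lowerThreshold_lt_one (hcl : 0 < cl) (hclp : cl < p) (hpcu : p < cu) :
    lowerThreshold p cl cu < 1 := by
  rw [lowerThreshold, div_lt_one (mul_pos (hcl.trans hclp) (by linarith))]
  nlinarith

theorem upperCdfBound_one_sub_lowerThreshold (hcl : 0 < cl) (hclp : cl < p) (hpcu : p < cu) :
    upperCdfBound p cl cu (1 - lowerThreshold p cl cu) = (cu - p) / (cu - cl) := by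
  have : p ≠ 0 := (hcl.trans hclp).ne'
  have : cu ≠ 0 := (hcl.trans (hclp.trans hpcu)).ne'
  have : cu - cl ≠ 0 := by linarith
  have h1 : (1 - lowerThreshold p cl cu) * p / cl = (cu - p) / (cu - cl) := by
    unfold lowerThreshold; field_simp; ring
  have h2 : (cu - p) / cu + (1 - lowerThreshold p cl cu) * p / cu = (cu - p) / (cu - cl) := by
    unfold lowerThreshold; field_simp; ring
  rw [upperCdfBound, h1, h2, min_self]

theorem lowerCdfBound_lowerThreshold (hcl : 0 < cl) (hclp : cl < p) (hpcu : p < cu) :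
    lowerCdfBound p cl cu (lowerThreshold p cl cu) = (p - cl) / (cu - cl) := by
  have : p ≠ 0 := (hcl.trans hclp).ne'
  have : cu ≠ 0 := (hcl.trans (hclp.trans hpcu)).ne'
  have : cu - cl ≠ 0 := by linarith
  have h1 : lowerThreshold p cl cu * p / cu = (p - cl) / (cu - cl) := by
    unfold lowerThreshold; field_simp
  have h2 : (cl - p) / cl + lowerThreshold p cl cu * p / cl = (p - cl) / (cu - cl) := by
    unfold lowerThreshold; field_simp; ring
  rw [lowerCdfBound, h1, h2, max_self]

end Thresholds

namespace ProbabilityTheory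

variable (μ : Measure ℝ) {p cl cu : ℝ}

theorem leftLim_upperCdfBound_le_and_le (hcl : 0 < cl) (hclp : cl < p) (hpcu : p < cu) :
    leftLim (upperCdfBound p cl cu ∘ cdf μ) (quantile (cdf μ) (1 - lowerThreshold p cl cu)) ≤
        (cu - p) / (cu - cl) ∧
      (cu - p) / (cu - cl) ≤
        upperCdfBound p cl cu (cdf μ (quantile (cdf μ) (1 - lowerThreshold p cl cu))) := by
  rw [← upperCdfBound_one_sub_lowerThreshold hcl hclp hpcu]
  exact leftLim_comp_cdf_quantile_le_and_le μ
    (upperCdfBound_monotone (by linarith) hcl.le (by linarith))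
    (sub_pos.mpr (lowerThreshold_lt_one hcl hclp hpcu))
    (sub_lt_self 1 (lowerThreshold_pos hcl hclp hpcu))

theorem leftLim_lowerCdfBound_le_and_le (hcl : 0 < cl) (hclp : cl < p) (hpcu : p < cu) :
    leftLim (lowerCdfBound p cl cu ∘ cdf μ) (quantile (cdf μ) (lowerThreshold p cl cu)) ≤
        (p - cl) / (cu - cl) ∧
      (p - cl) / (cu - cl) ≤
        lowerCdfBound p cl cu (cdf μ (quantile (cdf μ) (lowerThreshold p cl cu))) := by
  rw [← lowerCdfBound_lowerThreshold hcl hclp hpcu]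
  exact leftLim_comp_cdf_quantile_le_and_le μ
    (lowerCdfBound_monotone (by linarith) hcl.le (by linarith))
    (lowerThreshold_pos hcl hclp hpcu) (lowerThreshold_lt_one hcl hclp hpcu)

end ProbabilityTheory

theorem threshold_inequalities_cdf_bounds_general
    {Ω : Type*} [MeasurableSpace Ω] (P : Measure Ω) [IsProbabilityMeasure P]
    (Y1 Y0 : Ω → ℝ) (X : Ω → Bool)
    (hY1 : Measurable Y1) (hY0 : Measurable Y0) (hX : Measurable X)
    (Y : Ω → ℝ) (hY : ∀ ω, Y ω = if X ω then Y1 ω else Y0 ω)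
    (p1 p0 : ℝ) (hp1 : p1 = (P {ω | X ω = true}).toReal) (hp0 : p0 = 1 - p1)
    (cl cu : ℝ) (hcl : 0 < cl) (hclp1 : cl < p1) (hp1cu : p1 < cu) (hcu : cu < 1)
    (G1 G0 : ℝ → ℝ)
    (hG1 : ∀ y, G1 y = (P {ω | Y ω ≤ y ∧ X ω = true}).toReal / p1)
    (hG0 : ∀ y, G0 y = (P {ω | Y ω ≤ y ∧ X ω = false}).toReal / p0)
    (Fu1 Fl1 Fu0 Fl0 : ℝ → ℝ)
    (hFu1 : ∀ y, Fu1 y = min (G1 y * p1 / cl) ((cu - p1) / cu + G1 y * p1 / cu))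
    (hFl1 : ∀ y, Fl1 y = max (G1 y * p1 / cu) ((cl - p1) / cl + G1 y * p1 / cl))
    (hFu0 : ∀ y, Fu0 y = min (G0 y * p0 / (1 - cu)) ((p1 - cl) / (1 - cl) + G0 y * p0 / (1 - cl)))
    (hFl0 : ∀ y, Fl0 y = max (G0 y * p0 / (1 - cl)) ((p1 - cu) / (1 - cu) + G0 y * p0 / (1 - cu)))
    (τl1 τu1 τl0 τu0 Ql1 Qu1 Ql0 Qu0 : ℝ)
    (hτl1 : τl1 = (p1 - cl) * cu / (p1 * (cu - cl))) (hτu1 : τu1 = 1 - τl1)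
    (hQl1 : Ql1 = sInf {y : ℝ | τl1 ≤ G1 y}) (hQu1 : Qu1 = sInf {y : ℝ | τu1 ≤ G1 y})
    (hτl0 : τl0 = (cu - p1) * (1 - cl) / (p0 * (cu - cl))) (hτu0 : τu0 = 1 - τl0)
    (hQl0 : Ql0 = sInf {y : ℝ | τl0 ≤ G0 y}) (hQu0 : Qu0 = sInf {y : ℝ | τu0 ≤ G0 y}) :
    (max (Function.leftLim Fu1 Qu1) (Function.leftLim Fl0 Ql0) ≤ (cu - p1) / (cu - cl) ∧
      (cu - p1) / (cu - cl) ≤ min (Fu1 Qu1) (Fl0 Ql0)) ∧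
    (max (Function.leftLim Fu0 Qu0) (Function.leftLim Fl1 Ql1) ≤ (p1 - cl) / (cu - cl) ∧
      (p1 - cl) / (cu - cl) ≤ min (Fu0 Qu0) (Fl1 Ql1)) := by
  set A1 := {ω | X ω = true}
  set A0 := {ω | X ω = false}
  have hA1 : MeasurableSet A1 := hX (measurableSet_singleton true)
  have hA0 : MeasurableSet A0 := hX (measurableSet_singleton false)
  have hp0A0 : p0 = (P A0).toReal := by
    rw [hp0, hp1, show A0 = A1ᶜ by ext; simp [A0, A1], ← measureReal_def, ← measureReal_def,
      probReal_compl_eq_one_sub hA1]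
  have hPA1 : P A1 ≠ 0 := (ENNReal.toReal_pos_iff.mp (hp1 ▸ hcl.trans hclp1)).1.ne'
  have hPA0 : P A0 ≠ 0 := (ENNReal.toReal_pos_iff.mp (hp0A0 ▸ (by linarith : 0 < p0))).1.ne'
  have hYm : Measurable Y := (funext hY).symm ▸ Measurable.ite hA1 hY1 hY0
  obtain rfl : G1 = cdf ((P[|A1]).map Y) := funext fun y => by
    rw [hG1, cdf_map_cond_apply P hYm hA1 hPA1, hp1]; rfl
  obtain rfl : G0 = cdf ((P[|A0]).map Y) := funext fun y => by
    rw [hG0, cdf_map_cond_apply P hYm hA0 hPA0, hp0A0]; rfl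
  subst hp0 hτl1 hτu1 hτu0 hQu1 hQl1 hQu0 hQl0
  obtain rfl : Fu1 = upperCdfBound p1 cl cu ∘ _ := funext hFu1
  obtain rfl : Fl1 = lowerCdfBound p1 cl cu ∘ _ := funext hFl1
  obtain rfl : Fu0 = upperCdfBound (1 - p1) (1 - cu) (1 - cl) ∘ _ := funext fun y => by
    rw [hFu0, comp_apply, upperCdfBound, sub_sub_sub_cancel_left]
  obtain rfl : Fl0 = lowerCdfBound (1 - p1) (1 - cu) (1 - cl) ∘ _ := funext fun y => by
    rw [hFl0, comp_apply, lowerCdfBound, sub_sub_sub_cancel_left]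
  obtain rfl : lowerThreshold (1 - p1) (1 - cu) (1 - cl) = τl0 := by
    rw [hτl0, lowerThreshold, sub_sub_sub_cancel_left, sub_sub_sub_cancel_left]
  have h1u := leftLim_upperCdfBound_le_and_le ((P[|A1]).map Y) hcl hclp1 hp1cu
  have h1l := leftLim_lowerCdfBound_le_and_le ((P[|A1]).map Y) hcl hclp1 hp1cu
  obtain ⟨hcl0, hclp0, hp0cu⟩ : 0 < 1 - cu ∧ 1 - cu < 1 - p1 ∧ 1 - p1 < 1 - cl :=
    ⟨by linarith, by linarith, by linarith⟩
  have h0u := leftLim_upperCdfBound_le_and_le ((P[|A0]).map Y) hcl0 hclp0 hp0cu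
  have h0l := leftLim_lowerCdfBound_le_and_le ((P[|A0]).map Y) hcl0 hclp0 hp0cu
  simp only [sub_sub_sub_cancel_left] at h0u h0l
  exact ⟨⟨max_le h1u.1 h0l.1, le_min h1u.2 h0l.2⟩, ⟨max_le h0u.1 h1l.1, le_min h0u.2 h1l.2⟩⟩

/-- **Threshold inequalities for the cdf bounds.**
Under overlap and `0 < c̲ < p₁ < c̄ < 1`:
`max{F̄₁(Q̄₁−), F̲₀(Q̲₀−)} ≤ (c̄−p₁)/(c̄−c̲) ≤ min{F̄₁(Q̄₁), F̲₀(Q̲₀)}` and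
`max{F̄₀(Q̄₀−), F̲₁(Q̲₁−)} ≤ (p₁−c̲)/(c̄−c̲) ≤ min{F̄₀(Q̄₀), F̲₁(Q̲₁)}`. -/
theorem threshold_inequalities_cdf_bounds
    {Ω : Type*} [MeasurableSpace Ω] (P : Measure Ω) [IsProbabilityMeasure P]
    (Y1 Y0 : Ω → ℝ) (X : Ω → Bool)
    (hY1 : Measurable Y1) (hY0 : Measurable Y0) (hX : Measurable X)
    (Y : Ω → ℝ) (hY : ∀ ω, Y ω = if X ω then Y1 ω else Y0 ω)
    (p1 p0 : ℝ) (hp1 : p1 = (P {ω | X ω = true}).toReal) (hp0 : p0 = 1 - p1)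
    (hov : 0 < p1 ∧ p1 < 1)
    (cl cu : ℝ) (hcl : 0 < cl) (hclp1 : cl < p1) (hp1cu : p1 < cu) (hcu : cu < 1)
    (G1 G0 : ℝ → ℝ)
    (hG1 : ∀ y, G1 y = (P {ω | Y ω ≤ y ∧ X ω = true}).toReal / p1)
    (hG0 : ∀ y, G0 y = (P {ω | Y ω ≤ y ∧ X ω = false}).toReal / p0)
    (Fu1 Fl1 Fu0 Fl0 : ℝ → ℝ)
    (hFu1 : ∀ y, Fu1 y = min (G1 y * p1 / cl) ((cu - p1) / cu + G1 y * p1 / cu))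
    (hFl1 : ∀ y, Fl1 y = max (G1 y * p1 / cu) ((cl - p1) / cl + G1 y * p1 / cl))
    (hFu0 : ∀ y, Fu0 y = min (G0 y * p0 / (1 - cu)) ((p1 - cl) / (1 - cl) + G0 y * p0 / (1 - cl)))
    (hFl0 : ∀ y, Fl0 y = max (G0 y * p0 / (1 - cl)) ((p1 - cu) / (1 - cu) + G0 y * p0 / (1 - cu)))
    (τl1 τu1 τl0 τu0 Ql1 Qu1 Ql0 Qu0 : ℝ)
    (hτl1 : τl1 = (p1 - cl) * cu / (p1 * (cu - cl))) (hτu1 : τu1 = 1 - τl1)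
    (hQl1 : Ql1 = sInf {y : ℝ | τl1 ≤ G1 y}) (hQu1 : Qu1 = sInf {y : ℝ | τu1 ≤ G1 y})
    (hτl0 : τl0 = (cu - p1) * (1 - cl) / (p0 * (cu - cl))) (hτu0 : τu0 = 1 - τl0)
    (hQl0 : Ql0 = sInf {y : ℝ | τl0 ≤ G0 y}) (hQu0 : Qu0 = sInf {y : ℝ | τu0 ≤ G0 y}) :
    (max (Function.leftLim Fu1 Qu1) (Function.leftLim Fl0 Ql0) ≤ (cu - p1) / (cu - cl) ∧
      (cu - p1) / (cu - cl) ≤ min (Fu1 Qu1) (Fl0 Ql0)) ∧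
    (max (Function.leftLim Fu0 Qu0) (Function.leftLim Fl1 Ql1) ≤ (p1 - cl) / (cu - cl) ∧
      (p1 - cl) / (cu - cl) ≤ min (Fu0 Qu0) (Fl1 Ql1)) :=
  threshold_inequalities_cdf_bounds_general P Y1 Y0 X hY1 hY0 hX Y hY p1 p0 hp1 hp0 cl cu hcl hclp1
    hp1cu hcu G1 G0 hG1 hG0 Fu1 Fl1 Fu0 Fl0 hFu1 hFl1 hFu0 hFl0 τl1 τu1 τl0 τu0 Ql1 Qu1 Ql0 Qu0 hτl1
    hτu1 hQl1 hQu1 hτl0 hτu0 hQl0 hQu0
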